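/- The concatenation-product ⨰ on surreal numbers, defined by ℓ(x ⨰ y) = ℓ(x)·ℓ(y) (ordinal product) and (x ⨰ y)[ℓ(x)·α ∔ β] = y[α]·x[β] for α < ℓ(y), β < ℓ(x), is associative with identity 1, distributes over ∔ on the left (x ⨰ (y ∔ z) = (x ⨰ y) ∔ (x ⨰ z)), and satisfies x ⨰ (−1) = −x. -/

import Mathlib

open Ordinal

attribute [local instance] Classical.propDecidable

/-- A surreal number presented as a sign sequence: a map from an ordinal (its
length) to `{-1, +1}`, extended by `0` beyond its length. -/
structure SSurreal : Type 1 where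
  length : Ordinal.{0}
  sign : Ordinal → ℤ
  sign_mem : ∀ α, α < length → sign α = 1 ∨ sign α = -1
  sign_zero : ∀ α, ¬ α < length → sign α = 0

namespace SSurreal

/-- Simplicity: `x ⊑ y`, i.e. `x` is an initial segment of `y`. -/
def sle (x y : SSurreal) : Prop := ∀ α, α < x.length → x.sign α = y.sign α

/-- Strict simplicity `x ⊏ y`. -/
def slt (x y : SSurreal) : Prop := sle x y ∧ x ≠ y

/-- The (lexicographic, Conway) order on sign sequences. -/
def lt (x y : SSurreal) : Prop :=
  ∃ α, (∀ β, β < α → x.sign β = y.sign β) ∧ x.sign α < y.sign α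

/-- The empty sign sequence, i.e. the surreal number `0`. -/
noncomputable def zero : SSurreal :=
  ⟨0, fun _ => 0, fun α h => absurd h (by simp), fun _ _ => rfl⟩

/-- The ordinal `o` viewed as the constant `+1` sign sequence of length `o`. -/
noncomputable def ofOrdinal (o : Ordinal) : SSurreal :=
  ⟨o, fun α => if α < o then 1 else 0, fun α h => Or.inl (if_pos h), fun α h => if_neg h⟩

/-- The surreal number `1`. -/
noncomputable def one : SSurreal := ofOrdinal 1

/-- The surreal number `-1`. -/
noncomputable def negOne : SSurreal :=
  ⟨1, fun α => if α < 1 then -1 else 0, fun α h => Or.inr (if_pos h), fun α h => if_neg h⟩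

/-- Negation: flip every sign. -/
noncomputable def neg (x : SSurreal) : SSurreal :=
  ⟨x.length, fun α => - x.sign α,
    fun α h => by rcases x.sign_mem α h with h' | h' <;> simp [h'],
    fun α h => by simp [x.sign_zero α h]⟩

/-- Concatenation `x ∔ y` of sign sequences. -/
noncomputable def concat (x y : SSurreal) : SSurreal where
  length := x.length + y.length
  sign α := if α < x.length then x.sign α else y.sign (α - x.length)
  sign_mem := by
    intro α h
    try dsimp only
    by_cases hx : α < x.length
    · rw [if_pos hx]; exact x.sign_mem α hx
    · rw [if_neg hx]
      refine y.sign_mem _ ?_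
      have hle : x.length ≤ α := not_lt.mp hx
      have := Ordinal.sub_lt_of_le hle (c := y.length)
      exact this.mpr h
  sign_zero := by
    intro α h
    try dsimp only
    have hx : ¬ α < x.length := fun hx =>
      h (hx.trans_le le_self_add)
    rw [if_neg hx]
    refine y.sign_zero _ ?_
    intro hy
    exact h ((Ordinal.sub_lt_of_le (not_lt.mp hx)).mp hy)

/-- The concatenation product `x ⨰ y` of sign sequences. -/
noncomputable def mul (x y : SSurreal) : SSurreal where
  length := x.length * y.length
  sign γ := if γ < x.length * y.length then y.sign (γ / x.length) * x.sign (γ % x.length) else 0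
  sign_mem := by
    intro γ h
    try dsimp only
    rw [if_pos h]
    have hx0 : x.length ≠ 0 := by
      intro h0; rw [h0, zero_mul] at h; exact absurd h (by simp)
    have h1 : γ / x.length < y.length := by
      rwa [Ordinal.div_lt hx0]
    have h2 : γ % x.length < x.length := Ordinal.mod_lt γ hx0
    rcases y.sign_mem _ h1 with hy | hy <;> rcases x.sign_mem _ h2 with hx | hx <;>
      simp [hy, hx]
  sign_zero := fun γ h => if_neg h

/-- `s` is the supremum of `C` with respect to simplicity. -/
def IsSimpSup (C : Set SSurreal) (s : SSurreal) : Prop :=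
  (∀ x ∈ C, sle x s) ∧ ∀ t, (∀ x ∈ C, sle x t) → sle s t

/-- The supremum of a ⊏-chain of sign sequences (their union), when it
exists; junk value `zero` otherwise. -/
noncomputable def chainSup (C : Set SSurreal) : SSurreal :=
  if h : ∃ s, IsSimpSup C s then h.choose else zero

/-- Transfinite concatenation `[α, f] = ∔_{γ<α} f(γ)`. -/
noncomputable def concatSum (α : Ordinal) (f : Ordinal → SSurreal) : SSurreal :=
  Ordinal.limitRecOn α zero (fun β ih => concat ih (f β))
    (fun γ _ ih => chainSup (Set.range fun p : Set.Iio γ => ih p.1 p.2))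

/-- Restriction of `z` to an initial segment of length (at most) `β`. -/
noncomputable def trunc (z : SSurreal) (β : Ordinal) : SSurreal where
  length := min β z.length
  sign α := if α < min β z.length then z.sign α else 0
  sign_mem := fun α h => by
    try dsimp only
    rw [if_pos h]; exact z.sign_mem α (h.trans_le (min_le_right _ _))
  sign_zero := fun α h => if_neg h

/-- The number of `+1` signs occurring in `s` strictly below `γ`. -/
noncomputable def countPlus (s : Ordinal → ℤ) (γ : Ordinal) : Ordinal :=
  Ordinal.limitRecOn γ 0 (fun β ih => if s β = 1 then ih + 1 else ih)
    (fun γ' _ ih => ⨆ β : Set.Iio γ', ih β.1 β.2)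

/-- `τ_u`: the ordinal number of `+1` signs in the sign sequence of `u`. -/
noncomputable def tau (u : SSurreal) : Ordinal := countPlus u.sign u.length

end SSurreal

/-! Every position below `ℓ(x) · ℓ(y)` is uniquely `ℓ(x) · α + β` with `β < ℓ(x)` (ordinal
division with remainder), and there the product carries the sign `y[α] · x[β]`. Each identity
then reduces to ordinal arithmetic on these decompositions, e.g. distributivity to
`ℓ(x) · (ℓ(y) + α) + β = ℓ(x) · ℓ(y) + (ℓ(x) · α + β)`. -/

namespace Ordinal

theorem mul_add_div_of_lt {a q r : Ordinal} (hr : r < a) : (a * q + r) / a = q := by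
  rw [mul_add_div q hr.ne_zero, div_eq_zero_of_lt hr, add_zero]

theorem mul_add_mod_of_lt {a q r : Ordinal} (hr : r < a) : (a * q + r) % a = r := by
  rw [mul_add_mod_self, mod_eq_of_lt hr]

theorem mul_add_lt_mul {a b q r : Ordinal} (hq : q < b) (hr : r < a) : a * q + r < a * b := by
  rwa [lt_mul_iff_div_lt hr.ne_zero, mul_add_div_of_lt hr]

theorem exists_eq_mul_add {a : Ordinal} (ha : a ≠ 0) (γ : Ordinal) :
    ∃ q, ∃ r < a, γ = a * q + r :=
  ⟨γ / a, γ % a, mod_lt γ ha, (div_add_mod γ a).symm⟩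

end Ordinal

namespace SSurreal

theorem ext {x y : SSurreal} (hl : x.length = y.length)
    (hs : ∀ α < x.length, x.sign α = y.sign α) : x = y := by
  obtain ⟨l, s, _, hs₀⟩ := x
  obtain ⟨l', s', _, hs₀'⟩ := y
  obtain rfl : l = l' := hl
  obtain rfl : s = s' := funext fun α =>
    if h : α < l then hs α h else (hs₀ α h).trans (hs₀' α h).symm
  rfl

@[simp] theorem length_one : one.length = 1 := rfl

@[simp] theorem length_negOne : negOne.length = 1 := rfl

@[simp] theorem length_neg (x : SSurreal) : (neg x).length = x.length := rfl


@[simp] theorem length_concat (x y : SSurreal) : (concat x y).length = x.length + y.length := rfl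

@[simp] theorem length_mul (x y : SSurreal) : (mul x y).length = x.length * y.length := rfl

theorem sign_one_zero : one.sign 0 = 1 := if_pos zero_lt_one

theorem sign_negOne_zero : negOne.sign 0 = -1 := if_pos zero_lt_one

theorem sign_neg (x : SSurreal) (α : Ordinal) : (neg x).sign α = -x.sign α := rfl

theorem sign_concat_of_lt (x y : SSurreal) {α : Ordinal} (h : α < x.length) :
    (concat x y).sign α = x.sign α := if_pos h

theorem sign_concat_add (x y : SSurreal) (α : Ordinal) :
    (concat x y).sign (x.length + α) = y.sign α :=
  (if_neg (not_lt.2 le_self_add)).trans (congrArg y.sign (add_sub_cancel _ _))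

/-- Beyond `x.length * y.length` both sides vanish, so no bound on `γ` is needed. -/
theorem sign_mul (x y : SSurreal) (γ : Ordinal) :
    (mul x y).sign γ = y.sign (γ / x.length) * x.sign (γ % x.length) := by
  by_cases hγ : γ < x.length * y.length
  · exact if_pos hγ
  rw [show (mul x y).sign γ = 0 from if_neg hγ]
  rcases eq_or_ne x.length 0 with hx | hx
  · rw [x.sign_zero _ (by simp [hx]), mul_zero]
  · rw [y.sign_zero _ (by rwa [← lt_mul_iff_div_lt hx]), zero_mul]

theorem sign_mul_mul_add (x y : SSurreal) (α : Ordinal) {β : Ordinal} (hβ : β < x.length) :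
    (mul x y).sign (x.length * α + β) = y.sign α * x.sign β := by
  rw [sign_mul, mul_add_div_of_lt hβ, mul_add_mod_of_lt hβ]

theorem sign_mul_of_lt_length (x y : SSurreal) {γ : Ordinal} (hγ : γ < x.length) :
    (mul x y).sign γ = y.sign 0 * x.sign γ := by
  simpa using sign_mul_mul_add x y 0 hγ

protected theorem mul_assoc (x y z : SSurreal) : mul (mul x y) z = mul x (mul y z) := by
  refine ext (by simp [_root_.mul_assoc]) fun γ hγ => ?_
  have hx : x.length ≠ 0 := by rintro h; simp [h] at hγ
  obtain ⟨q, r, hr, rfl⟩ := exists_eq_mul_add hx γ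
  rw [sign_mul_mul_add x _ _ hr, sign_mul (mul x y), length_mul, mul_add_div_mul hr,
    mul_add_mod_mul hr, sign_mul_mul_add x y _ hr, sign_mul y z, _root_.mul_assoc]

protected theorem mul_one (x : SSurreal) : mul x one = x :=
  ext (by simp) fun γ hγ => by
    rw [sign_mul_of_lt_length x one (by simpa using hγ), sign_one_zero, _root_.one_mul]

protected theorem one_mul (x : SSurreal) : mul one x = x :=
  ext (by simp) fun γ _ => by
    rw [sign_mul, length_one, div_one, mod_one, sign_one_zero, _root_.mul_one]

theorem mul_negOne (x : SSurreal) : mul x negOne = neg x :=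
  ext (by simp) fun γ hγ => by
    rw [sign_mul_of_lt_length x negOne (by simpa using hγ), sign_negOne_zero, sign_neg,
      neg_one_mul]

theorem mul_concat (x y z : SSurreal) : mul x (concat y z) = concat (mul x y) (mul x z) := by
  refine ext (by simp [mul_add]) fun γ hγ => ?_
  have hx : x.length ≠ 0 := by rintro h; simp [h] at hγ
  obtain ⟨q, r, hr, rfl⟩ := exists_eq_mul_add hx γ
  rw [sign_mul_mul_add x _ _ hr]
  rcases lt_or_ge q y.length with hq | hq
  · rw [sign_concat_of_lt _ _ hq, sign_concat_of_lt _ _ (by simpa using mul_add_lt_mul hq hr),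
      sign_mul_mul_add x y _ hr]
  · obtain ⟨s, rfl⟩ := exists_add_of_le hq
    rw [sign_concat_add, mul_add, add_assoc, ← length_mul, sign_concat_add,
      sign_mul_mul_add x z _ hr]

end SSurreal

open SSurreal in
/-- the concatenation product `⨰` is associative with identity
`1`, distributes over `∔` on the left, and satisfies `x ⨰ (−1) = −x`. -/
theorem mul_assoc_identity_left_distrib_neg :
    (∀ x y z : SSurreal, mul (mul x y) z = mul x (mul y z)) ∧
    (∀ x : SSurreal, mul x one = x ∧ mul one x = x) ∧
    (∀ x y z : SSurreal, mul x (concat y z) = concat (mul x y) (mul x z)) ∧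
    (∀ x : SSurreal, mul x negOne = neg x) :=
  ⟨SSurreal.mul_assoc, fun x => ⟨x.mul_one, x.one_mul⟩, mul_concat, mul_negOne⟩
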